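/- For any partition λ with at most m parts, the sum of dual Grothendieck polynomials g_μ(q_1,…,q_n) over all partitions μ contained in λ equals g_λ(1, q_1, …, q_n) (the branching relation). -/

import Mathlib

open scoped BigOperators

/-- A plane partition: an ℕ-matrix (indexed from 0) with finitely many nonzero
entries, weakly decreasing along rows and columns. -/
structure PlanePartition where
  entry : ℕ → ℕ → ℕ
  finite_support : (Function.support fun p : ℕ × ℕ => entry p.1 p.2).Finite
  row_dec : ∀ i j, entry i (j + 1) ≤ entry i j
  col_dec : ∀ i j, entry (i + 1) j ≤ entry i j

/-- `c_ℓ(π)`: the number of columns of `π` containing the entry `ℓ`. -/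
noncomputable def colCount (π : PlanePartition) (ℓ : ℕ) : ℕ :=
  {j | ∃ i, π.entry i j = ℓ}.ncard

/-- `d_{iℓ}`: the number of columns `j` with `π_{ij} = ℓ > π_{i+1,j}` (row `i` indexed from 0,
`ℓ` an actual entry value). -/
noncomputable def dstat (π : PlanePartition) (i ℓ : ℕ) : ℕ :=
  {j | π.entry i j = ℓ ∧ π.entry (i + 1) j < ℓ}.ncard

/-- `λ_k`: the number of positive entries in row `k` (indexed from 0) of `π`. -/
noncomputable def part (π : PlanePartition) (k : ℕ) : ℕ :=
  {j | 0 < π.entry k j}.ncard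

/-- `π` has shape `λ` (with `λ : ℕ → ℕ` indexed from 0). -/
def HasShape (π : PlanePartition) (lam : ℕ → ℕ) : Prop :=
  ∀ k, part π k = lam k

/-- `λ` is an integer partition with at most `m` parts (indexed from 0). -/
def IsPartWithParts (m : ℕ) (lam : ℕ → ℕ) : Prop :=
  Antitone lam ∧ ∀ i, m ≤ i → lam i = 0

/-- The dual Grothendieck polynomial
`g_λ(x_1,…,x_n) = Σ_{π : sh(π) = λ, entries ≤ n} ∏_i x_i^{c_i(π)}`. -/
noncomputable def dualG (lam : ℕ → ℕ) (n : ℕ) (x : Fin n → ℝ) : ℝ :=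
  ∑' π : {π : PlanePartition // HasShape π lam ∧ ∀ i j, π.entry i j ≤ n},
    ∏ ℓ : Fin n, x ℓ ^ colCount π.1 (ℓ.1 + 1)

/-- A unit step of a directed lattice path. -/
def IsStep (a b : ℕ × ℕ) : Prop :=
  b = (a.1 + 1, a.2) ∨ b = (a.1, a.2 + 1)

/-- `p` is a directed lattice path from `s` to `t`. -/
def IsDirPath (p : List (ℕ × ℕ)) (s t : ℕ × ℕ) : Prop :=
  p.head? = some s ∧ p.getLast? = some t ∧ p.Chain' IsStep

/-- The sum of the weights `W` along the path `p`. -/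
def pathSum (W : ℕ → ℕ → ℕ) (p : List (ℕ × ℕ)) : ℕ :=
  (p.map fun a => W a.1 a.2).sum

/-- Last-passage time from `s` to `(m, n)` for the weight matrix `W` (1-indexed). -/
noncomputable def lpt (W : ℕ → ℕ → ℕ) (s : ℕ × ℕ) (m n : ℕ) : ℕ :=
  sSup {v | ∃ p, IsDirPath p s (m, n) ∧ v = pathSum W p}

/-- Extend an `m × n` matrix (indexed from 0) to a 1-indexed matrix on `ℕ × ℕ`, zero outside. -/
def ext (m n : ℕ) (w : Fin m → Fin n → ℕ) : ℕ → ℕ → ℕ := fun i j =>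
  if hi : i - 1 < m then if hj : j - 1 < n then w ⟨i - 1, hi⟩ ⟨j - 1, hj⟩ else 0 else 0

/-- Probability weight of a fixed `m × n` matrix of outcomes under independent geometric
entries: entry in column `ℓ` takes value `k` with probability `(1 - q_ℓ) q_ℓ^k`. -/
noncomputable def geomWt {m n : ℕ} (q : Fin n → ℝ) (w : Fin m → Fin n → ℕ) : ℝ :=
  ∏ i : Fin m, ∏ ℓ : Fin n, (1 - q ℓ) * q ℓ ^ w i ℓ

/-- Probability of an event `E` for an `m × n` matrix of independent geometric entries
with column parameters `q`. -/
noncomputable def geomProb {m n : ℕ} (q : Fin n → ℝ) (E : Set (Fin m → Fin n → ℕ)) : ℝ :=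
  ∑' w : E, geomWt q w.1

/-- The complete homogeneous symmetric polynomial `h_a(x_1,…,x_N)`: the sum of all
monomials of degree `a`. -/
noncomputable def hpoly (a N : ℕ) (x : Fin N → ℝ) : ℝ :=
  ∑ f ∈ Finset.univ.filter (fun f : Fin a → Fin N => ∀ i j, i ≤ j → f i ≤ f j),
    ∏ t, x (f t)

/-- `h` with an integer index, vanishing for negative degrees. -/
noncomputable def hpolyZ (a : ℤ) (N : ℕ) (x : Fin N → ℝ) : ℝ :=
  if 0 ≤ a then hpoly a.toNat N x else 0

/-- The Schur polynomial of `λ` (at most `m` parts) via the Jacobi–Trudi determinant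
`s_λ = det[h_{λ_i - i + j}]_{i,j=1}^m`. -/
noncomputable def schur (lam : ℕ → ℕ) (m N : ℕ) (x : Fin N → ℝ) : ℝ :=
  Matrix.det (Matrix.of fun i j : Fin m =>
    hpolyZ ((lam i.1 : ℤ) - (i.1 + 1) + (j.1 + 1)) N x)

/-- The rectangular partition `(a^m)` as a function `ℕ → ℕ`. -/
def rectPart (a m : ℕ) : ℕ → ℕ := fun k => if k < m then a else 0

/-! Subtracting one from every entry maps the plane partitions of shape `λ` with entries
at most `n + 1` bijectively onto the pairs `(μ, π)` with `μ ⊆ λ` and `π` of shape `μ` with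
entries at most `n`; the inverse adds one inside `λ`. The columns containing `ℓ + 1` after
the subtraction are those that contained `ℓ + 2` before, and the lost entries `1` are
weighted by `x_1 = 1`, so the bijection is weight-preserving. -/

namespace PlanePartition

abbrev OfShape (lam : ℕ → ℕ) (n : ℕ) : Type :=
  {π : PlanePartition // HasShape π lam ∧ ∀ i j, π.entry i j ≤ n}

@[ext]
theorem ext {π π' : PlanePartition} (h : π.entry = π'.entry) : π = π' := by
  cases π; cases π'; simp_all

theorem antitone_entry (π : PlanePartition) (i : ℕ) : Antitone (π.entry i) :=
  antitone_nat_of_succ_le (π.row_dec i)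

theorem finite_setOf_entry_pos (π : PlanePartition) (i : ℕ) :
    {j | 0 < π.entry i j}.Finite :=
  (π.finite_support.preimage (Prod.mk_right_injective i).injOn).subset
    fun _ hj => Nat.pos_iff_ne_zero.mp hj

theorem setOf_entry_pos_eq_Iio (π : PlanePartition) (i : ℕ) :
    {j | 0 < π.entry i j} = Set.Iio (part π i) := by
  have hlower : IsLowerSet {j | 0 < π.entry i j} :=
    fun _ _ hjk hk => lt_of_lt_of_le hk (π.antitone_entry i hjk)
  obtain huniv | ⟨a, ha⟩ := hlower.eq_univ_or_Iio
  · exact absurd (huniv ▸ π.finite_setOf_entry_pos i) Set.infinite_univ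
  · rw [part, ha, Set.ncard_Iio_nat]

theorem entry_pos_iff (π : PlanePartition) (i j : ℕ) : 0 < π.entry i j ↔ j < part π i :=
  Set.ext_iff.mp (π.setOf_entry_pos_eq_Iio i) j

theorem entry_eq_zero_of_hasShape {π : PlanePartition} {lam : ℕ → ℕ} (hs : HasShape π lam)
    {i j : ℕ} (hj : lam i ≤ j) : π.entry i j = 0 := by
  by_contra h
  have := (π.entry_pos_iff i j).mp (Nat.pos_of_ne_zero h)
  rw [hs i] at this
  omega

theorem antitone_part (π : PlanePartition) : Antitone (part π) :=
  antitone_nat_of_succ_le fun i =>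
    Set.ncard_le_ncard (fun j hj => lt_of_lt_of_le hj (π.col_dec i j))
      (π.finite_setOf_entry_pos i)

theorem finite_of_hasShape {m : ℕ} {lam : ℕ → ℕ} (hlam : IsPartWithParts m lam) (n : ℕ) :
    Finite (OfShape lam n) := by
  have hzero {π : PlanePartition} (hs : HasShape π lam) {i j : ℕ}
      (hij : ¬(i < m ∧ j < lam 0)) : π.entry i j = 0 := by
    refine entry_eq_zero_of_hasShape hs ?_
    by_cases hi : i < m
    · exact le_trans (hlam.1 (Nat.zero_le i)) (by omega)
    · rw [hlam.2 i (by omega)]; exact Nat.zero_le j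
  refine Finite.of_injective (fun π (p : Fin m × Fin (lam 0)) =>
    (⟨π.1.entry p.1 p.2, Nat.lt_succ_of_le (π.2.2 _ _)⟩ : Fin (n + 1))) fun π σ h => ?_
  ext i j
  by_cases hij : i < m ∧ j < lam 0
  · simpa using congrFun h (⟨i, hij.1⟩, ⟨j, hij.2⟩)
  · rw [hzero π.2.1 hij, hzero σ.2.1 hij]

def pred (π : PlanePartition) : PlanePartition where
  entry i j := π.entry i j - 1
  finite_support := π.finite_support.subset fun p hp => by
    simp only [Function.mem_support] at hp ⊢
    omega
  row_dec i j := Nat.sub_le_sub_right (π.row_dec i j) 1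
  col_dec i j := Nat.sub_le_sub_right (π.col_dec i j) 1

theorem part_pred_le (π : PlanePartition) (i : ℕ) : part π.pred i ≤ part π i :=
  Set.ncard_le_ncard (fun j (hj : 0 < π.entry i j - 1) => show 0 < π.entry i j by omega)
    (π.finite_setOf_entry_pos i)

theorem colCount_pred (π : PlanePartition) (ℓ : ℕ) :
    colCount π.pred (ℓ + 1) = colCount π (ℓ + 2) := by
  unfold colCount
  congr 1
  ext j
  exact exists_congr fun i => show π.entry i j - 1 = ℓ + 1 ↔ _ by omega

def succOn {m : ℕ} {lam : ℕ → ℕ} (hlam : IsPartWithParts m lam) (π : PlanePartition) :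
    PlanePartition where
  entry i j := if j < lam i then π.entry i j + 1 else 0
  finite_support := by
    refine ((Set.finite_Iio m).prod (Set.finite_Iio (lam 0))).subset fun p hp => ?_
    have hin : p.2 < lam p.1 := by
      by_contra h
      simp [h] at hp
    refine ⟨?_, lt_of_lt_of_le hin (hlam.1 (Nat.zero_le _))⟩
    by_contra h
    rw [hlam.2 p.1 (not_lt.mp h)] at hin
    omega
  row_dec i j := by
    by_cases h : j + 1 < lam i
    · simp only [h, if_pos (show j < lam i by omega)]
      exact Nat.succ_le_succ (π.row_dec i j)
    · simp [h]
  col_dec i j := by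
    by_cases h : j < lam (i + 1)
    · simp only [h, if_pos (lt_of_lt_of_le h (hlam.1 (Nat.le_succ i)))]
      exact Nat.succ_le_succ (π.col_dec i j)
    · simp [h]

variable {m : ℕ} {lam : ℕ → ℕ} (hlam : IsPartWithParts m lam)

theorem hasShape_succOn (π : PlanePartition) : HasShape (π.succOn hlam) lam := by
  intro k
  have hrow : {j | 0 < (π.succOn hlam).entry k j} = Set.Iio (lam k) := by
    ext j
    show 0 < (if j < lam k then π.entry k j + 1 else 0) ↔ j < lam k
    split_ifs <;> simp [*]
  rw [part, hrow, Set.ncard_Iio_nat]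

theorem pred_succOn {π : PlanePartition} (hπ : ∀ i j, lam i ≤ j → π.entry i j = 0) :
    (π.succOn hlam).pred = π := by
  ext i j
  show (if j < lam i then π.entry i j + 1 else 0) - 1 = π.entry i j
  split_ifs with h
  · rfl
  · exact (hπ i j (not_lt.mp h)).symm

theorem succOn_pred {π : PlanePartition} (hs : HasShape π lam) : π.pred.succOn hlam = π := by
  ext i j
  show (if j < lam i then π.entry i j - 1 + 1 else 0) = π.entry i j
  have hpos := π.entry_pos_iff i j
  rw [hs i] at hpos
  split_ifs with h
  · exact Nat.sub_add_cancel (hpos.mpr h)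
  · exact (entry_eq_zero_of_hasShape hs (not_lt.mp h)).symm

end PlanePartition

open PlanePartition

abbrev Subpartition (lam : ℕ → ℕ) : Type :=
  {μ : ℕ → ℕ // Antitone μ ∧ ∀ i, μ i ≤ lam i}

noncomputable def colWeight {n : ℕ} (x : Fin n → ℝ) (π : PlanePartition) : ℝ :=
  ∏ ℓ : Fin n, x ℓ ^ colCount π (ℓ.1 + 1)

theorem colWeight_cons_one {n : ℕ} (q : Fin n → ℝ) (π : PlanePartition) :
    colWeight (Fin.cons 1 q : Fin (n + 1) → ℝ) π = colWeight q π.pred := by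
  simp only [colWeight, Fin.prod_univ_succ, Fin.cons_zero, Fin.cons_succ, one_pow, one_mul,
    Fin.val_succ, colCount_pred]

noncomputable def predEquiv {m : ℕ} {lam : ℕ → ℕ} (hlam : IsPartWithParts m lam) (n : ℕ) :
    OfShape lam (n + 1) ≃ Σ μ : Subpartition lam, OfShape μ.1 n where
  toFun π :=
    ⟨⟨part π.1.pred, π.1.pred.antitone_part, fun i => π.2.1 i ▸ π.1.part_pred_le i⟩,
      π.1.pred, fun _ => rfl, fun i j => Nat.sub_le_of_le_add (π.2.2 i j)⟩
  invFun p := ⟨p.2.1.succOn hlam, hasShape_succOn hlam _, fun i j => by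
    show (if j < lam i then _ else 0) ≤ n + 1
    split_ifs
    exacts [Nat.succ_le_succ (p.2.2.2 i j), Nat.zero_le _]⟩
  left_inv π := Subtype.ext (succOn_pred hlam π.2.1)
  right_inv p := by
    have hpred : (p.2.1.succOn hlam).pred = p.2.1 := pred_succOn hlam fun i j hj =>
      entry_eq_zero_of_hasShape p.2.2.1 (le_trans (p.1.2.2 i) hj)
    refine Sigma.subtype_ext (Subtype.ext (funext fun k => ?_)) hpred
    exact (congrArg (part · k) hpred).trans (p.2.2.1 k)

/-- branching relation: for a partition `λ` with at most `m` parts,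
`Σ_{μ ⊆ λ} g_μ(q_1,…,q_n) = g_λ(1, q_1, …, q_n)`. -/
theorem stmt7 (m n : ℕ) (lam : ℕ → ℕ) (hlam : IsPartWithParts m lam)
    (q : Fin n → ℝ) :
    ∑' μ : {μ : ℕ → ℕ // Antitone μ ∧ ∀ i, μ i ≤ lam i}, dualG μ.1 n q =
      dualG lam (n + 1) (Fin.cons 1 q) := by
  have : Finite (OfShape lam (n + 1)) := finite_of_hasShape hlam (n + 1)
  have : Finite (Σ μ : Subpartition lam, OfShape μ.1 n) := .of_equiv _ (predEquiv hlam n)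
  have hsum : Summable fun p : Σ μ : Subpartition lam, OfShape μ.1 n => colWeight q p.2.1 :=
    .of_finite
  calc ∑' μ : Subpartition lam, dualG μ.1 n q
      = ∑' p : Σ μ : Subpartition lam, OfShape μ.1 n, colWeight q p.2.1 := hsum.tsum_sigma.symm
    _ = ∑' π : OfShape lam (n + 1), colWeight q π.1.pred :=
        ((predEquiv hlam n).tsum_eq fun p => colWeight q p.2.1).symm
    _ = dualG lam (n + 1) (Fin.cons 1 q) := tsum_congr fun π => (colWeight_cons_one q π.1).symm
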